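/- Let β > 0 and let μ_0 = N(m_0, Σ_0), μ_1 = N(m_1, Σ_1) be Gaussian measures on ℝ^d with positive definite covariances satisfying Σ_0^{-1} ⪯ βI and Σ_1^{-1} ⪯ βI. Then KL(μ_0 ‖ μ_1) ≤ β W2²(μ_0, μ_1), where KL(μ_0 ‖ μ_1) = (1/2)(tr(Σ_1^{-1} Σ_0) − d + ⟨m_1 − m_0, Σ_1^{-1}(m_1 − m_0)⟩ + log(det Σ_1 / det Σ_0)) is the Kullback–Leibler divergence between the two Gaussians. -/

import Mathlib

open MeasureTheory Matrix Real Filter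
open scoped RealInnerProductSpace ENNReal NNReal

noncomputable section

abbrev E (d : ℕ) := EuclideanSpace ℝ (Fin d)
abbrev Mat (d : ℕ) := Matrix (Fin d) (Fin d) ℝ

variable {d : ℕ}

/-- Principal positive semidefinite square root of a matrix (junk value `0` if the
matrix is not positive semidefinite). -/
def msqrt (A : Mat d) : Mat d := by
  classical exact if h : A.PosSemidef then
    (h.1.eigenvectorUnitary : Mat d) * diagonal ((↑) ∘ (Real.sqrt ∘ h.1.eigenvalues)) *
      (star h.1.eigenvectorUnitary : Mat d) else 0

/-- Loewner order `A ⪯ B`, i.e. `B - A` is positive semidefinite. -/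
def Loewner (A B : Mat d) : Prop := (B - A).PosSemidef

/-- The `ℓ² → ℓ²` operator norm of a matrix. -/
def opNorm (A : Mat d) : ℝ := ‖Matrix.toEuclideanCLM (𝕜 := ℝ) A‖

/-- Largest eigenvalue of a (Hermitian) matrix; junk value `0` otherwise. -/
def lamMax (A : Mat d) : ℝ := by
  classical exact if h : A.IsHermitian then ⨆ i, h.eigenvalues i else 0

/-- Density of the Gaussian `N(m, S)` with respect to Lebesgue measure. -/
def gaussPdf (m : E d) (S : Mat d) (x : E d) : ℝ :=
  (Real.sqrt ((2 * Real.pi) ^ d * S.det))⁻¹ *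
    Real.exp (-(1 / 2 : ℝ) * ⟪x - m, (S⁻¹).toEuclideanLin (x - m)⟫)

/-- The Gaussian measure `N(m, S)` on `ℝ^d`. -/
def gaussian (m : E d) (S : Mat d) : Measure (E d) :=
  (volume : Measure (E d)).withDensity fun x => ENNReal.ofReal (gaussPdf m S x)

/-- Hessian matrix of `V : ℝ^d → ℝ` at `x`. -/
def hess (V : E d → ℝ) (x : E d) : Mat d := fun i j =>
  fderiv ℝ (fun y => fderiv ℝ V y (EuclideanSpace.single j 1)) x (EuclideanSpace.single i 1)

/-- `∫ ∇V dN(m,S)`. -/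
def meanGrad (V : E d → ℝ) (m : E d) (S : Mat d) : E d :=
  ∫ x, gradient V x ∂ gaussian m S

/-- `∫ ∇²V dN(m,S)`. -/
def meanHess (V : E d → ℝ) (m : E d) (S : Mat d) : Mat d := fun i j =>
  ∫ x, hess V x i j ∂ gaussian m S

/-- Negative entropy `H(N(m,S)) = ∫ log(N(m,S)) dN(m,S) = -(1/2) log((2πe)^d det S)`. -/
def negEnt (S : Mat d) : ℝ := -(1 / 2 : ℝ) * Real.log ((2 * Real.pi * Real.exp 1) ^ d * S.det)

/-- Squared `2`-Wasserstein distance between the Gaussians `N(m₀,S₀)` and `N(m₁,S₁)`. -/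
def W2sq (m0 m1 : E d) (S0 S1 : Mat d) : ℝ :=
  ‖m0 - m1‖ ^ 2 + (S0 + S1 - (2 : ℝ) • msqrt (msqrt S0 * S1 * msqrt S0)).trace

/-- The objective `F(N(m,S)) = ∫ V dN(m,S) + H(N(m,S))`. -/
def Fobj (V : E d → ℝ) (m : E d) (S : Mat d) : ℝ :=
  (∫ x, V x ∂ gaussian m S) + negEnt S

/-- Optimal transport map from `N(m₀,S₀)` to `N(m₁,S₁)`. -/
def otMap (m0 m1 : E d) (S0 S1 : Mat d) (x : E d) : E d :=
  m1 + ((msqrt S0)⁻¹ * msqrt (msqrt S0 * S1 * msqrt S0) * (msqrt S0)⁻¹).toEuclideanLin (x - m0)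

/-- One step of FB–GVI on the (mean, covariance) pair. -/
def fbStep (V : E d → ℝ) (η : ℝ) (p : E d × Mat d) : E d × Mat d :=
  let Sh := (1 - η • meanHess V p.1 p.2) * p.2 * (1 - η • meanHess V p.1 p.2)
  (p.1 - η • meanGrad V p.1 p.2,
    (1 / 2 : ℝ) • (Sh + (2 * η) • (1 : Mat d) + msqrt (Sh * (Sh + (4 * η) • 1))))

/-- The FB–GVI iterates. -/
def fbgvi (V : E d → ℝ) (η : ℝ) (p0 : E d × Mat d) : ℕ → E d × Mat d
  | 0 => p0
  | k + 1 => fbStep V η (fbgvi V η p0 k)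

/-- One step of Stochastic FB–GVI with sample `x`. -/
def sfbStep (V : E d → ℝ) (η : ℝ) (p : E d × Mat d) (x : E d) : E d × Mat d :=
  let Sh := (1 - η • hess V x) * p.2 * (1 - η • hess V x)
  (p.1 - η • gradient V x,
    (1 / 2 : ℝ) • (Sh + (2 * η) • (1 : Mat d) + msqrt (Sh * (Sh + (4 * η) • 1))))

/-- The Stochastic FB–GVI iterates driven by the samples `X`. -/
def sfbgvi {Ω : Type*} (V : E d → ℝ) (η : ℝ) (p0 : E d × Mat d) (X : ℕ → Ω → E d) :
    ℕ → Ω → E d × Mat d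
  | 0 => fun _ => p0
  | k + 1 => fun ω => sfbStep V η (sfbgvi V η p0 X k ω) (X k ω)

/-- The σ-algebra generated by `X 0, …, X (k-1)`. -/
def natFilt {Ω : Type*} [MeasurableSpace Ω] (X : ℕ → Ω → E d) (k : ℕ) : MeasurableSpace Ω :=
  ⨆ i ∈ Finset.range k, MeasurableSpace.comap (X i) inferInstance


/-!
Let `A = Σ₀^{-1/2} (Σ₀^{1/2} Σ₁ Σ₀^{1/2})^{1/2} Σ₀^{-1/2}` be the matrix of the optimal transport
map, so that `A Σ₀ A = Σ₁` and the covariance part of `W₂²` is the transport cost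
`tr((A - I) Σ₀ (A - I)) = tr((A⁻¹ - I) Σ₁ (A⁻¹ - I))`. In terms of `A`,
`2 KL = tr(Σ₁⁻¹ Q) + 2 (tr A⁻¹ - d + log det A) + ⟨Δm, Σ₁⁻¹ Δm⟩` with `Q = (A⁻¹ - I) Σ₁ (A⁻¹ - I)`.
The bounds `Σᵢ⁻¹ ⪯ β I`, equivalently `I ⪯ β Σᵢ`, bound `tr(Σ₁⁻¹ Q)`, `tr (A - I)²` and
`tr (A⁻¹ - I)²` by `β` times the cost, and the eigenvalue inequality
`6 (a⁻¹ - 1 + log a) ≤ (a - 1)² + 2 (a⁻¹ - 1)²` turns the last two into a bound on the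
log-determinant term.
-/

open scoped MatrixOrder

lemma six_mul_inv_sub_one_add_log_le {a : ℝ} (ha : 0 < a) :
    6 * (a⁻¹ - 1 + Real.log a) ≤ (a - 1) ^ 2 + 2 * (a⁻¹ - 1) ^ 2 := by
  set f : ℝ → ℝ := fun x => (x - 1) ^ 2 + 2 * (x⁻¹ - 1) ^ 2 - 6 * (x⁻¹ - 1 + Real.log x)
  -- `f' x = 2 (x - 1)³ (x + 2) / x³`, so `f` is minimal at `1`, where it vanishes.
  have hf' : ∀ x, 0 < x → HasDerivAt f (2 * (x - 1) ^ 3 * (x + 2) / x ^ 3) x := by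
    intro x hx
    have hinv := (hasDerivAt_inv hx.ne').sub_const 1
    refine ((((hasDerivAt_id x).sub_const 1).fun_pow 2).add ((hinv.fun_pow 2).const_mul 2) |>.sub
      ((hinv.add (Real.hasDerivAt_log hx.ne')).const_mul 6)).congr_deriv ?_
    have := hx.ne'
    norm_num
    field_simp
    ring
  have hcont : ContinuousOn f (Set.Ioi 0) := fun x hx => (hf' x hx).continuousAt.continuousWithinAt
  suffices 0 ≤ f a by simp only [f] at this; linarith
  have hf1 : f 1 = 0 := by simp [f]
  rcases le_total 1 a with h | h
  · have hmono : MonotoneOn f (Set.Ici 1) := by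
      refine monotoneOn_of_hasDerivWithinAt_nonneg (convex_Ici 1)
        (hcont.mono fun x hx => by simp at hx ⊢; linarith)
        (fun x hx => (hf' x (by simp at hx; linarith)).hasDerivWithinAt) fun x hx => ?_
      simp only [interior_Ici, Set.mem_Ioi] at hx
      have : 0 ≤ (x - 1) ^ 3 := pow_nonneg (by linarith) 3
      positivity
    simpa [hf1] using hmono Set.self_mem_Ici h h
  · have hanti : AntitoneOn f (Set.Icc a 1) := by
      refine antitoneOn_of_hasDerivWithinAt_nonpos (convex_Icc a 1)
        (hcont.mono fun x hx => by simp at hx ⊢; linarith)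
        (fun x hx => (hf' x (by simp at hx; linarith)).hasDerivWithinAt) fun x hx => ?_
      simp only [interior_Icc, Set.mem_Ioo] at hx
      have : (x - 1) ^ 3 ≤ 0 := Odd.pow_nonpos (by decide) (by linarith)
      have : 0 < x ^ 3 := pow_pos (by linarith) 3
      exact div_nonpos_of_nonpos_of_nonneg (by nlinarith) this.le
    simpa [hf1] using hanti ⟨le_rfl, h⟩ ⟨h, le_rfl⟩ h

namespace Matrix

variable {n : Type*} [Fintype n] [DecidableEq n]

lemma IsHermitian.trace_cfc {𝕜 : Type*} [RCLike 𝕜] {A : Matrix n n 𝕜} (hA : A.IsHermitian)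
    (f : ℝ → ℝ) : (cfc f A).trace = ∑ i, (f (hA.eigenvalues i) : 𝕜) := by
  rw [hA.cfc_eq, IsHermitian.cfc, Unitary.conjStarAlgAut_apply, trace_mul_cycle,
    Unitary.coe_star_mul_self, one_mul, trace_diagonal]
  rfl

lemma PosDef.inv_eq_cfc {B : Matrix n n ℝ} (hB : B.PosDef) : B⁻¹ = cfc (·⁻¹ : ℝ → ℝ) B := by
  rw [nonsing_inv_eq_ringInverse]
  exact (cfc_ringInverse_id (R := ℝ) B hB.isUnit hB.1).symm

lemma PosDef.six_mul_trace_inv_sub_card_add_log_det_le {B : Matrix n n ℝ} (hB : B.PosDef) :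
    6 * (B⁻¹.trace - Fintype.card n + Real.log B.det)
      ≤ ((B - 1) * (B - 1)).trace + 2 * ((B⁻¹ - 1) * (B⁻¹ - 1)).trace := by
  have hsq : ∀ f : ℝ → ℝ, (cfc f B - 1) * (cfc f B - 1) = cfc (fun x => (f x - 1) ^ 2) B := by
    intro f
    have hc := B.finite_real_spectrum.continuousOn (Y := ℝ)
    rw [← cfc_one ℝ B, ← cfc_sub _ _ _ (hc _) (hc _), ← cfc_mul _ _ _ (hc _) (hc _)]
    simp only [Pi.one_apply, sq]
  have hlog : Real.log B.det = ∑ i, Real.log (hB.1.eigenvalues i) := by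
    rw [hB.1.det_eq_prod_eigenvalues]
    exact Real.log_prod fun i _ => (hB.eigenvalues_pos i).ne'
  have hB1 := hsq id
  rw [cfc_id ℝ B] at hB1
  have key : ∑ i, 6 * ((hB.1.eigenvalues i)⁻¹ - 1 + Real.log (hB.1.eigenvalues i))
      ≤ ∑ i, ((hB.1.eigenvalues i - 1) ^ 2 + 2 * ((hB.1.eigenvalues i)⁻¹ - 1) ^ 2) :=
    Finset.sum_le_sum fun i _ => six_mul_inv_sub_one_add_log_le (hB.eigenvalues_pos i)
  rw [hB1, hB.inv_eq_cfc, hsq, hB.1.trace_cfc, hB.1.trace_cfc, hB.1.trace_cfc, hlog]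
  simp only [Finset.sum_add_distrib, Finset.sum_sub_distrib, ← Finset.mul_sum, Finset.sum_const,
    Finset.card_univ, nsmul_eq_mul, mul_one, RCLike.ofReal_real_eq_id, id] at key ⊢
  linarith

lemma PosSemidef.trace_mul_nonneg {X P : Matrix n n ℝ} (hX : X.PosSemidef) (hP : P.PosSemidef) :
    0 ≤ (X * P).trace := by
  set R := CFC.sqrt P
  have hR : R.PosSemidef := (CFC.sqrt_nonneg P).posSemidef
  have hRX : (R * X * R).PosSemidef := by
    simpa only [hR.1.eq] using hX.conjTranspose_mul_mul_same R
  rw [← CFC.sqrt_mul_sqrt_self P hP.nonneg, ← Matrix.mul_assoc, trace_mul_cycle]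
  exact hRX.trace_nonneg

lemma trace_sub_one_mul_mul_sub_one {R : Type*} [CommRing R] (X S : Matrix n n R) :
    ((X - 1) * S * (X - 1)).trace = S.trace + (X * S * X).trace - 2 * (X * S).trace := by
  simp only [Matrix.mul_sub, Matrix.sub_mul, Matrix.mul_one, Matrix.one_mul, trace_sub,
    trace_mul_comm S X]
  ring

lemma trace_inv_sub_one_mul_mul_inv_sub_one {R : Type*} [CommRing R] (A S : Matrix n n R)
    [Invertible A] :
    ((A⁻¹ - 1) * (A * S * A) * (A⁻¹ - 1)).trace = ((A - 1) * S * (A - 1)).trace := by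
  have e₁ : A⁻¹ * (A * S * A) * A⁻¹ = S := by simp [Matrix.mul_assoc]
  have e₂ : A⁻¹ * (A * S * A) = S * A := by simp [Matrix.mul_assoc]
  rw [trace_sub_one_mul_mul_sub_one, trace_sub_one_mul_mul_sub_one, e₁, e₂, trace_mul_comm S A]
  ring

end Matrix

lemma msqrt_eq_sqrt {A : Mat d} (hA : A.PosSemidef) : msqrt A = CFC.sqrt A := by
  rw [CFC.sqrt_eq_real_sqrt A hA.nonneg, cfcₙ_eq_cfc, hA.1.cfc_eq, msqrt, dif_pos hA]
  rfl

lemma exists_posDef_mul_mul_eq_and_trace_msqrt {S₀ S₁ : Mat d} (h₀ : S₀.PosDef) (h₁ : S₁.PosDef) :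
    ∃ A : Mat d, A.PosDef ∧ A * S₀ * A = S₁ ∧
      (msqrt (msqrt S₀ * S₁ * msqrt S₀)).trace = (A * S₀).trace := by
  rw [msqrt_eq_sqrt h₀.posSemidef]
  set R := CFC.sqrt S₀
  have hR : R.PosDef := (h₀.isStrictlyPositive.sqrt).posDef
  have hRR : R * R = S₀ := CFC.sqrt_mul_sqrt_self S₀ h₀.posSemidef.nonneg
  have : Invertible R := hR.isUnit.invertible
  have hC : (R * S₁ * R).PosDef := by
    simpa only [hR.1.eq] using
      h₁.conjTranspose_mul_mul_same (mulVec_injective_iff_isUnit.mpr hR.isUnit)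
  rw [msqrt_eq_sqrt hC.posSemidef]
  set M := CFC.sqrt (R * S₁ * R)
  have hM : M.PosDef := (hC.isStrictlyPositive.sqrt).posDef
  have hMM : M * M = R * S₁ * R := CFC.sqrt_mul_sqrt_self _ hC.posSemidef.nonneg
  refine ⟨R⁻¹ * M * R⁻¹, ?_, ?_, ?_⟩
  · simpa only [hR.inv.1.eq] using
      hM.conjTranspose_mul_mul_same (mulVec_injective_iff_isUnit.mpr hR.inv.isUnit)
  · calc R⁻¹ * M * R⁻¹ * S₀ * (R⁻¹ * M * R⁻¹) = R⁻¹ * (M * M) * R⁻¹ := by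
          simp only [← hRR, Matrix.mul_assoc, inv_mul_cancel_left_of_invertible,
            mul_inv_cancel_left_of_invertible]
      _ = S₁ := by simp [hMM, Matrix.mul_assoc]
  · have : R⁻¹ * M * R⁻¹ * S₀ = R⁻¹ * M * R := by
      simp only [← hRR, Matrix.mul_assoc, inv_mul_cancel_left_of_invertible]
    rw [this, trace_mul_cycle, mul_inv_of_invertible, Matrix.one_mul]

lemma Loewner.trace_mul_le {A B P : Mat d} (h : Loewner A B) (hP : P.PosSemidef) :
    (A * P).trace ≤ (B * P).trace := by
  have := PosSemidef.trace_mul_nonneg h hP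
  rw [Matrix.sub_mul, trace_sub] at this
  linarith

lemma Loewner.inner_le {S : Mat d} {β : ℝ} (h : Loewner S (β • 1)) (x : E d) :
    ⟪x, S.toEuclideanLin x⟫ ≤ β * ‖x‖ ^ 2 := by
  have := (Matrix.isPositive_toEuclideanLin_iff.mpr h).inner_nonneg_right x
  simp only [map_sub, map_smul, LinearMap.sub_apply, LinearMap.smul_apply, inner_sub_right,
    real_inner_smul_right] at this
  rw [show toEuclideanLin 1 x = x by simp, real_inner_self_eq_norm_sq] at this
  linarith

lemma Loewner.one_smul_of_inv_smul_one {S : Mat d} {β : ℝ} (hS : S.PosDef)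
    (h : Loewner S⁻¹ (β • 1)) : Loewner 1 (β • S) := by
  set R := CFC.sqrt S
  have hR : R.PosDef := (hS.isStrictlyPositive.sqrt).posDef
  have hRR : R * R = S := CFC.sqrt_mul_sqrt_self S hS.posSemidef.nonneg
  have : Invertible R := hR.isUnit.invertible
  have hconj : R * (β • 1 - S⁻¹) * R = β • S - 1 := by
    rw [← hRR, Matrix.mul_inv_rev]
    simp [Matrix.mul_sub, Matrix.sub_mul]
  simpa only [Loewner, hR.1.eq, hconj] using h.conjTranspose_mul_mul_same R

lemma Loewner.trace_mul_self_le {S X : Mat d} {β : ℝ} (h : Loewner 1 (β • S))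
    (hX : X.IsHermitian) : (X * X).trace ≤ β * (X * S * X).trace := by
  have hXX : (X * X).PosSemidef := by simpa only [hX.eq] using posSemidef_conjTranspose_mul_self X
  have := h.trace_mul_le hXX
  rwa [Matrix.one_mul, Matrix.smul_mul, trace_smul, smul_eq_mul, ← trace_mul_comm (X * X),
    ← trace_mul_cycle] at this

lemma two_mul_trace_inv_sub_add_log_det_le {β : ℝ} {A S : Mat d} (hA : A.PosDef)
    (h₀ : Loewner 1 (β • S)) (h₁ : Loewner 1 (β • (A * S * A))) :
    2 * (A⁻¹.trace - d + Real.log A.det) ≤ β * ((A - 1) * S * (A - 1)).trace := by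
  have : Invertible A := hA.isUnit.invertible
  have hA₀ := h₀.trace_mul_self_le (hA.1.sub isHermitian_one)
  have hA₁ := h₁.trace_mul_self_le (hA.inv.1.sub isHermitian_one)
  have := hA.six_mul_trace_inv_sub_card_add_log_det_le
  rw [trace_inv_sub_one_mul_mul_inv_sub_one] at hA₁
  rw [Fintype.card_fin] at this
  linarith

lemma trace_inv_mul_sub_add_log_det_div_le {β : ℝ} {A S : Mat d} (hA : A.PosDef)
    (hS : S.PosDef) (h₀ : Loewner S⁻¹ (β • 1)) (h₁ : Loewner (A * S * A)⁻¹ (β • 1)) :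
    ((A * S * A)⁻¹ * S).trace - d + Real.log ((A * S * A).det / S.det)
      ≤ 2 * β * ((A - 1) * S * (A - 1)).trace := by
  set T := A * S * A with hTdef
  have : Invertible A := hA.isUnit.invertible
  have hT : T.PosDef := by
    simpa only [hA.1.eq] using
      hS.conjTranspose_mul_mul_same (mulVec_injective_iff_isUnit.mpr hA.isUnit)
  have : Invertible T := hT.isUnit.invertible
  set Q := (A⁻¹ - 1) * T * (A⁻¹ - 1)
  have hQ : Q.PosSemidef := by
    have := hT.posSemidef.conjTranspose_mul_mul_same (A⁻¹ - 1)
    rwa [(hA.inv.1.sub isHermitian_one).eq] at this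
  have hsplit : (T⁻¹ * S).trace - d = (T⁻¹ * Q).trace + 2 * (A⁻¹.trace - d) := by
    have hS' : A⁻¹ * T * A⁻¹ = S := by simp [hTdef, Matrix.mul_assoc]
    have hQ' : Q = A⁻¹ * T * A⁻¹ - A⁻¹ * T - T * A⁻¹ + T := by
      simp only [Q, Matrix.sub_mul, Matrix.mul_sub, Matrix.mul_one, Matrix.one_mul]; abel
    rw [hQ', hS', Matrix.mul_add, Matrix.mul_sub, Matrix.mul_sub, trace_add, trace_sub, trace_sub,
      trace_mul_comm T⁻¹ (A⁻¹ * T), Matrix.mul_assoc, mul_inv_of_invertible, ← Matrix.mul_assoc,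
      inv_mul_of_invertible, Matrix.mul_one, Matrix.one_mul, trace_one, Fintype.card_fin]
    ring
  have hdet : Real.log (T.det / S.det) = 2 * Real.log A.det := by
    rw [hTdef, det_mul, det_mul, mul_comm (det A), mul_assoc, mul_div_cancel_left₀ _ hS.det_pos.ne',
      ← sq, Real.log_pow, Nat.cast_ofNat]
  have hQβ : (T⁻¹ * Q).trace ≤ β * Q.trace := by
    simpa only [Matrix.smul_mul, Matrix.one_mul, trace_smul, smul_eq_mul] using h₁.trace_mul_le hQ
  have hlog := two_mul_trace_inv_sub_add_log_det_le hA
    (h₀.one_smul_of_inv_smul_one hS) (h₁.one_smul_of_inv_smul_one hT)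
  rw [trace_inv_sub_one_mul_mul_inv_sub_one] at hQβ
  linarith

/-- if `Σ₀⁻¹ ⪯ βI` and `Σ₁⁻¹ ⪯ βI`, then `KL(μ₀ ‖ μ₁) ≤ β W₂²(μ₀, μ₁)`. -/
theorem statement19 (d : ℕ) (β : ℝ) (hβ : 0 < β) (m0 m1 : E d) (S0 S1 : Mat d)
    (h0 : S0.PosDef) (h1 : S1.PosDef)
    (hb0 : Loewner S0⁻¹ (β • (1 : Mat d))) (hb1 : Loewner S1⁻¹ (β • (1 : Mat d))) :
    (1 / 2 : ℝ) * ((S1⁻¹ * S0).trace - d + ⟪m1 - m0, (S1⁻¹).toEuclideanLin (m1 - m0)⟫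
        + Real.log (S1.det / S0.det))
      ≤ β * W2sq m0 m1 S0 S1 := by
  obtain ⟨A, hA, rfl, hM⟩ := exists_posDef_mul_mul_eq_and_trace_msqrt h0 h1
  have hcov := trace_inv_mul_sub_add_log_det_div_le hA h0 hb0 hb1
  have hmean := hb1.inner_le (m1 - m0)
  have hW : (S0 + A * S0 * A - (2 : ℝ) • msqrt (msqrt S0 * (A * S0 * A) * msqrt S0)).trace
      = ((A - 1) * S0 * (A - 1)).trace := by
    rw [trace_sub, trace_add, trace_smul, hM, trace_sub_one_mul_mul_sub_one, smul_eq_mul]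
  have : 0 ≤ β * ‖m1 - m0‖ ^ 2 := by positivity
  rw [W2sq, hW, norm_sub_rev]
  linarith

end
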